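/- The maximal set of individuals who suffer from a violation of the Equality Code under the Over-and-Above rule with the original non-overlapping membership profile is uniquely defined, and equals Ĉ((ρ̊_{-J̄}, ρ̃_{J̄}); I) \ Ĉ(ρ̊; I) where J̄ = (𝒥 ∩ I) \ Ĉ(ρ̊; I). -/

import Mathlib

attribute [local instance] Classical.propDecidable

noncomputable section

variable {ι R : Type*} [Fintype ι] [DecidableEq ι] [Fintype R] [DecidableEq R]

/-- Eligibility sets: everyone is eligible for the open category (`none`),
and `elig c` is the set of members of VR-protected category `c`. -/
def eligOf (elig : R → Finset ι) : Option R → Finset ι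
  | none => (Finset.univ : Finset ι)
  | some c => elig c

/-- Aggregate choice: all individuals chosen across all categories. -/
def aggC (C : Finset ι → Option R → Finset ι) (I : Finset ι) : Finset ι :=
  Finset.univ.biUnion fun v => C I v

/-- `C` is a choice rule for capacities `q` and eligibility `elig`: each category chooses
eligible applicants up to capacity, and no individual is chosen by two categories. -/
def IsChoiceRule (q : Option R → ℕ) (elig : R → Finset ι)
    (C : Finset ι → Option R → Finset ι) : Prop :=
  ∀ I : Finset ι,
    (∀ v, C I v ⊆ I ∩ eligOf elig v) ∧
    (∀ v, (C I v).card ≤ q v) ∧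
    (∀ v v', v ≠ v' → Disjoint (C I v) (C I v'))

/-- Non-wastefulness: no position remains idle while an eligible applicant is unchosen. -/
def NonWasteful (q : Option R → ℕ) (elig : R → Finset ι)
    (C : Finset ι → Option R → Finset ι) : Prop :=
  ∀ (I : Finset ι) (v : Option R) (j : ι),
    j ∈ I → j ∉ aggC C I → (C I v).card < q v → j ∉ eligOf elig v

/-- No justified envy: a chosen individual outscores every eligible entirely-unchosen applicant. -/
def NoJustifiedEnvy (σ : ι → ℝ) (elig : R → Finset ι)
    (C : Finset ι → Option R → Finset ι) : Prop :=
  ∀ (I : Finset ι) (v : Option R) (i j : ι),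
    i ∈ C I v → j ∈ I → j ∈ eligOf elig v → j ∉ aggC C I → σ j < σ i

/-- Compliance with VR protections: a VR recipient implies the open category is full, with
every open-category recipient scoring strictly higher. -/
def CompliesVR (σ : ι → ℝ) (q : Option R → ℕ)
    (C : Finset ι → Option R → Finset ι) : Prop :=
  ∀ (I : Finset ι) (c : R) (i : ι), i ∈ C I (some c) →
    (C I none).card = q none ∧ ∀ j ∈ C I none, σ i < σ j

/-- The (at most) `k` highest merit-score members of `S`. -/
def topK (σ : ι → ℝ) (S : Finset ι) (k : ℕ) : Finset ι :=
  S.filter fun i => (S.filter fun j => σ i ≤ σ j).card ≤ k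

/-- The Over-and-Above choice rule: open positions go to the top-merit applicants; then each
VR category's quota is filled by the highest-merit remaining eligible members. -/
def OA (σ : ι → ℝ) (q : Option R → ℕ) (elig : R → Finset ι)
    (I : Finset ι) : Option R → Finset ι
  | none => topK σ I (q none)
  | some c => topK σ ((I \ topK σ I (q none)) ∩ elig c) (q (some c))

/-- Eligibility sets induced by a membership profile `ρ`. -/
def eligρ (ρ : ι → Finset R) (c : R) : Finset ι :=
  Finset.univ.filter fun i => c ∈ ρ i

/-- Aggregate outcome of the Over-and-Above rule under membership profile `ρ`. -/
def aggOA (σ : ι → ℝ) (q : Option R → ℕ) (ρ : ι → Finset R) (I : Finset ι) : Finset ι :=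
  aggC (OA σ q (eligρ ρ)) I

/-- The profile `(ρ₋ⱼ, ρ̃ⱼ)`: each member of `J` is reassigned membership `{e}` only. -/
def updProf (ρ : ι → Finset R) (e : R) (J : Finset ι) : ι → Finset R :=
  fun i => if i ∈ J then {e} else ρ i

/-- `J ⊆ 𝒥 ∩ I` suffers from a violation of the Equality Code under the Over-and-Above rule
with profile `ρ` for `I`: every member of `J` is unchosen under `ρ` but chosen once the
members of `J` are reassigned membership `{e}`. -/
def Suffers (σ : ι → ℝ) (q : Option R → ℕ) (ρ : ι → Finset R) (e : R)
    (JJ I J : Finset ι) : Prop :=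
  J ⊆ JJ ∩ I ∧ ∀ j ∈ J, j ∉ aggOA σ q ρ I ∧ j ∈ aggOA σ q (updProf ρ e J) I

/-- `J` is a maximal set of individuals suffering from a violation of the Equality Code. -/
def MaximalSuffers (σ : ι → ℝ) (q : Option R → ℕ) (ρ : ι → Finset R) (e : R)
    (JJ I J : Finset ι) : Prop :=
  J ⊆ (JJ ∩ I) \ aggOA σ q ρ I ∧
  Suffers σ q ρ e JJ I J ∧
  ∀ J' ⊆ (JJ ∩ I) \ aggOA σ q ρ I, J ⊂ J' →
    ¬ Suffers σ q ρ e JJ I J' ∧ J ⊆ aggOA σ q (updProf ρ e J') I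

/-! Reassigning a set `J` of unchosen applicants to the EWS category `e` alone changes only the
EWS choice: the open category and every other VR category choose as before, since no member of
`J` was chosen there. Hence, among the applicants unchosen under `ρ̊`, the ones chosen after the
reassignment are `g J`, the top `q e` of `P ∪ J` minus `Ĉ(ρ̊; I)`, where `P` is the EWS pool
under `ρ̊`. The top `q e` of `P` are already chosen under `ρ̊`, so `g J ⊆ J`; and if
`g J̄ ⊆ J ⊆ J̄` then the top `q e` of `P ∪ J̄` already lie in `P ∪ J`, so `g J = g J̄`.
A set suffering a violation is a `J ⊆ J̄` with `J ⊆ g J`, and these two facts force the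
maximal one to be `g J̄`. -/

open Finset

set_option linter.unusedSectionVars false

section TopK

variable {α : Type*} {σ : α → ℝ} {S S' : Finset α} {k : ℕ} {i j : α}

def rank (σ : α → ℝ) (S : Finset α) (i : α) : ℕ :=
  #(S.filter fun j => σ i ≤ σ j)

theorem mem_topK : i ∈ topK σ S k ↔ i ∈ S ∧ rank σ S i ≤ k :=
  mem_filter

theorem topK_subset (σ : α → ℝ) (S : Finset α) (k : ℕ) : topK σ S k ⊆ S :=
  filter_subset _ _

theorem rank_mono (h : S' ⊆ S) : rank σ S' i ≤ rank σ S i :=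
  card_le_card (filter_subset_filter _ h)

theorem rank_lt_rank_of_lt (hi : i ∈ S) (h : σ i < σ j) : rank σ S j < rank σ S i := by
  refine card_lt_card ⟨fun t ht => ?_, fun hsub => ?_⟩
  · simp only [mem_filter] at ht ⊢
    exact ⟨ht.1, h.le.trans ht.2⟩
  · have := (mem_filter.mp (hsub (mem_filter.mpr ⟨hi, le_rfl⟩))).2
    exact this.not_gt h

theorem rank_le_rank_of_le (h : σ i ≤ σ j) : rank σ S j ≤ rank σ S i :=
  card_le_card fun t ht => by
    simp only [mem_filter] at ht ⊢
    exact ⟨ht.1, h.trans ht.2⟩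

theorem rank_injOn (hσ : Function.Injective σ) : Set.InjOn (rank σ S) S := by
  intro i hi j hj hij
  by_contra hne
  rcases lt_or_gt_of_ne (hσ.ne hne) with h | h
  · exact (rank_lt_rank_of_lt hi h).ne' hij
  · exact (rank_lt_rank_of_lt hj h).ne hij

theorem image_rank (hσ : Function.Injective σ) : S.image (rank σ S) = Icc 1 #S := by
  refine eq_of_subset_of_card_le (fun m hm => ?_) ?_
  · obtain ⟨i, hi, rfl⟩ := mem_image.mp hm
    exact mem_Icc.mpr ⟨card_pos.mpr ⟨i, mem_filter.mpr ⟨hi, le_rfl⟩⟩, card_filter_le _ _⟩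
  · rw [card_image_of_injOn (rank_injOn hσ), Nat.card_Icc]
    omega

theorem card_topK (hσ : Function.Injective σ) (S : Finset α) (k : ℕ) :
    #(topK σ S k) = min k #S := by
  have hfilter : topK σ S k = S.filter fun i => rank σ S i ≤ k := rfl
  have hIcc : (Icc 1 #S).filter (· ≤ k) = Icc 1 (min k #S) := by
    ext m
    simp only [mem_filter, mem_Icc]
    omega
  have himage : (S.filter fun i => rank σ S i ≤ k).image (rank σ S) = Icc 1 (min k #S) := by
    rw [← hIcc, ← image_rank hσ, filter_image]
  rw [hfilter, ← card_image_of_injOn ((rank_injOn hσ).mono (filter_subset _ S)), himage,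
    Nat.card_Icc, Nat.add_sub_cancel]

theorem mem_topK_of_subset (h : S' ⊆ S) (hi : i ∈ S') (hS : i ∈ topK σ S k) :
    i ∈ topK σ S' k :=
  mem_topK.mpr ⟨hi, (rank_mono h).trans (mem_topK.mp hS).2⟩

theorem lt_of_mem_topK_of_notMem_topK (hj : j ∈ topK σ S k) (hi : i ∈ S)
    (hi' : i ∉ topK σ S k) : σ i < σ j :=
  not_le.mp fun h => hi' (mem_topK.mpr ⟨hi, (rank_le_rank_of_le h).trans (mem_topK.mp hj).2⟩)

theorem topK_eq_of_topK_subset_of_subset (hσ : Function.Injective σ) (h₁ : topK σ S k ⊆ S')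
    (h₂ : S' ⊆ S) : topK σ S' k = topK σ S k := by
  refine Subset.antisymm (fun i hi => ?_) fun i hi => mem_topK_of_subset h₂ (h₁ hi) hi
  by_contra hiS
  obtain ⟨hiS', hrank⟩ := mem_topK.mp hi
  have hk : k < #S := calc
    k < rank σ S i := not_le.mp fun h => hiS (mem_topK.mpr ⟨h₂ hiS', h⟩)
    _ ≤ #S := card_filter_le _ _
  -- `i` together with the `k` members of `topK σ S k` all score at least `σ i` in `S'`
  have hsub : insert i (topK σ S k) ⊆ S'.filter fun j => σ i ≤ σ j := by
    refine insert_subset (mem_filter.mpr ⟨hiS', le_rfl⟩) fun t ht => ?_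
    exact mem_filter.mpr ⟨h₁ ht, (lt_of_mem_topK_of_notMem_topK ht (h₂ hiS') hiS).le⟩
  have hcard := card_le_card hsub
  rw [card_insert_of_notMem hiS, card_topK hσ, min_eq_left hk.le] at hcard
  exact hrank.not_gt hcard

theorem topK_union_sdiff_subset [DecidableEq α] {P A J : Finset α}
    (hP : topK σ P k ⊆ A) : topK σ (P ∪ J) k \ A ⊆ J := by
  intro i hi
  obtain ⟨hiPJ, hiA⟩ := mem_sdiff.mp hi
  rcases mem_union.mp (topK_subset σ _ k hiPJ) with hiP | hiJ
  · exact absurd (hP (mem_topK_of_subset subset_union_left hiP hiPJ)) hiA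
  · exact hiJ

theorem topK_union_eq_of_subset [DecidableEq α] (hσ : Function.Injective σ) {P J U : Finset α}
    (h₁ : topK σ (P ∪ U) k ∩ U ⊆ J) (h₂ : J ⊆ U) : topK σ (P ∪ J) k = topK σ (P ∪ U) k := by
  refine topK_eq_of_topK_subset_of_subset hσ (fun t ht => ?_) (union_subset_union_right h₂)
  rcases mem_union.mp (topK_subset σ _ k ht) with htP | htU
  · exact mem_union_left _ htP
  · exact mem_union_right _ (h₁ (mem_inter.mpr ⟨ht, htU⟩))

end TopK

theorem maximal_le_apply_iff_eq_apply {β : Type*} [PartialOrder β] {g : β → β} {u x : β}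
    (hu : g u ≤ u) (hg : ∀ y, g u ≤ y → y ≤ u → g y = g u) :
    (x ≤ u ∧ x ≤ g x ∧ ∀ y ≤ u, x < y → ¬ y ≤ g y ∧ x ≤ g y) ↔ x = g u := by
  constructor
  · rintro ⟨hxu, hxgx, hmax⟩
    have hxgu : x ≤ g u := by
      rcases hxu.eq_or_lt with rfl | hlt
      · exact hxgx
      · exact (hmax u le_rfl hlt).2
    by_contra hne
    exact (hmax (g u) hu (hxgu.lt_of_ne hne)).1 (hg _ le_rfl hu).ge
  · rintro rfl
    refine ⟨hu, (hg _ le_rfl hu).ge, fun y hyu hlt => ?_⟩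
    rw [hg y hlt.le hyu]
    exact ⟨hlt.not_ge, le_rfl⟩

section OverAndAbove

variable {σ : ι → ℝ} {q : Option R → ℕ} {ρ : ι → Finset R} {e : R} {I J : Finset ι}

def vrPool (σ : ι → ℝ) (q : Option R → ℕ) (elig : R → Finset ι) (I : Finset ι) (c : R) :
    Finset ι :=
  (I \ topK σ I (q none)) ∩ elig c

def newlyChosen (σ : ι → ℝ) (q : Option R → ℕ) (ρ : ι → Finset R) (e : R) (I J : Finset ι) :
    Finset ι :=
  aggOA σ q (updProf ρ e J) I \ aggOA σ q ρ I

theorem mem_aggC {C : Finset ι → Option R → Finset ι} {i : ι} :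
    i ∈ aggC C I ↔ ∃ v, i ∈ C I v := by
  simp [aggC]

theorem OA_none (elig : R → Finset ι) : OA σ q elig I none = topK σ I (q none) := rfl

theorem OA_some (elig : R → Finset ι) (c : R) :
    OA σ q elig I (some c) = topK σ (vrPool σ q elig I c) (q (some c)) := rfl

theorem eligρ_updProf_of_ne {c : R} (hc : c ≠ e) :
    eligρ (updProf ρ e J) c = eligρ ρ c \ J := by
  ext i
  simp only [eligρ, mem_filter, mem_univ, true_and, mem_sdiff]
  by_cases hi : i ∈ J <;> simp [updProf, hi, hc]

theorem eligρ_updProf_self : eligρ (updProf ρ e J) e = eligρ ρ e ∪ J := by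
  ext i
  simp only [eligρ, mem_filter, mem_univ, true_and, mem_union]
  by_cases hi : i ∈ J <;> simp [updProf, hi]

theorem subset_sdiff_topK_of_subset_sdiff_aggOA (hJ : J ⊆ I \ aggOA σ q ρ I) :
    J ⊆ I \ topK σ I (q none) :=
  hJ.trans (sdiff_subset_sdiff le_rfl fun _ hi => mem_aggC.mpr ⟨none, hi⟩)

theorem OA_updProf_of_ne (hσ : Function.Injective σ) (hJ : J ⊆ I \ aggOA σ q ρ I) {c : R}
    (hc : c ≠ e) : OA σ q (eligρ (updProf ρ e J)) I (some c) = OA σ q (eligρ ρ) I (some c) := by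
  rw [OA_some, OA_some, vrPool, eligρ_updProf_of_ne hc, ← inter_sdiff_assoc]
  refine topK_eq_of_topK_subset_of_subset hσ (fun t ht => ?_) sdiff_subset
  refine mem_sdiff.mpr ⟨topK_subset σ _ _ ht, fun htJ => ?_⟩
  exact (mem_sdiff.mp (hJ htJ)).2 (mem_aggC.mpr ⟨some c, ht⟩)

theorem vrPool_updProf_self (hJ : J ⊆ I \ aggOA σ q ρ I) :
    vrPool σ q (eligρ (updProf ρ e J)) I e = vrPool σ q (eligρ ρ) I e ∪ J := by
  rw [vrPool, vrPool, eligρ_updProf_self, inter_union_distrib_left,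
    inter_eq_right.mpr (subset_sdiff_topK_of_subset_sdiff_aggOA hJ)]

theorem newlyChosen_eq (hσ : Function.Injective σ) (hJ : J ⊆ I \ aggOA σ q ρ I) :
    newlyChosen σ q ρ e I J =
      topK σ (vrPool σ q (eligρ ρ) I e ∪ J) (q (some e)) \ aggOA σ q ρ I := by
  ext i
  simp only [newlyChosen, mem_sdiff]
  refine and_congr_left fun hiA => ⟨fun hi => ?_, fun hi => ?_⟩
  · obtain ⟨_ | c, hv⟩ := mem_aggC.mp hi
    · rw [OA_none] at hv
      exact absurd (mem_aggC.mpr ⟨none, hv⟩) hiA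
    · by_cases hc : c = e
      · subst hc
        rwa [OA_some, vrPool_updProf_self hJ] at hv
      · rw [OA_updProf_of_ne hσ hJ hc] at hv
        exact absurd (mem_aggC.mpr ⟨some c, hv⟩) hiA
  · refine mem_aggC.mpr ⟨some e, ?_⟩
    rwa [OA_some, vrPool_updProf_self hJ]

theorem newlyChosen_subset (hσ : Function.Injective σ) (hJ : J ⊆ I \ aggOA σ q ρ I) :
    newlyChosen σ q ρ e I J ⊆ J := by
  rw [newlyChosen_eq hσ hJ]
  exact topK_union_sdiff_subset fun i hi => mem_aggC.mpr ⟨some e, hi⟩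

theorem newlyChosen_eq_of_subset (hσ : Function.Injective σ) {U : Finset ι}
    (hU : U ⊆ I \ aggOA σ q ρ I) (h₁ : newlyChosen σ q ρ e I U ⊆ J) (h₂ : J ⊆ U) :
    newlyChosen σ q ρ e I J = newlyChosen σ q ρ e I U := by
  rw [newlyChosen_eq hσ hU] at h₁ ⊢
  rw [newlyChosen_eq hσ (h₂.trans hU), topK_union_eq_of_subset hσ _ h₂]
  have hUA : Disjoint U (aggOA σ q ρ I) := disjoint_of_subset_left hU sdiff_disjoint
  refine subset_trans ?_ h₁
  exact subset_sdiff.mpr ⟨inter_subset_left, disjoint_of_subset_left inter_subset_right hUA⟩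

theorem suffers_iff {JJ : Finset ι} :
    Suffers σ q ρ e JJ I J ↔ J ⊆ JJ ∩ I ∧ J ⊆ newlyChosen σ q ρ e I J := by
  simp only [Suffers, newlyChosen, subset_iff, mem_sdiff, and_comm]

theorem maximalSuffers_iff {JJ : Finset ι} :
    MaximalSuffers σ q ρ e JJ I J ↔
      J ⊆ (JJ ∩ I) \ aggOA σ q ρ I ∧ J ⊆ newlyChosen σ q ρ e I J ∧
        ∀ J' ⊆ (JJ ∩ I) \ aggOA σ q ρ I, J ⊂ J' →
          ¬ J' ⊆ newlyChosen σ q ρ e I J' ∧ J ⊆ newlyChosen σ q ρ e I J' := by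
  refine and_congr_right fun hJ => and_congr ?_ (forall₂_congr fun J' hJ' =>
    imp_congr_right fun _ => and_congr (not_congr ?_) ?_)
  · rw [suffers_iff]
    exact and_iff_right (hJ.trans sdiff_subset)
  · rw [suffers_iff]
    exact and_iff_right (hJ'.trans sdiff_subset)
  · rw [newlyChosen, subset_sdiff]
    exact (and_iff_left (disjoint_of_subset_left hJ sdiff_disjoint)).symm

end OverAndAbove

theorem maximal_suffers_unique_general (σ : ι → ℝ) (hσ : Function.Injective σ)
    (q : Option R → ℕ) (ρ : ι → Finset R) (e : R)
    (JJ : Finset ι) :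
    ∀ I : Finset ι,
      MaximalSuffers σ q ρ e JJ I
        (aggOA σ q (updProf ρ e ((JJ ∩ I) \ aggOA σ q ρ I)) I \ aggOA σ q ρ I) ∧
      ∀ J : Finset ι, MaximalSuffers σ q ρ e JJ I J →
        J = aggOA σ q (updProf ρ e ((JJ ∩ I) \ aggOA σ q ρ I)) I \ aggOA σ q ρ I := by
  intro I
  have hU : (JJ ∩ I) \ aggOA σ q ρ I ⊆ I \ aggOA σ q ρ I :=
    sdiff_subset_sdiff inter_subset_right le_rfl
  have key := fun J => maximal_le_apply_iff_eq_apply (x := J)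
    (newlyChosen_subset (e := e) hσ hU) fun J h₁ h₂ => newlyChosen_eq_of_subset hσ hU h₁ h₂
  exact ⟨maximalSuffers_iff.mpr ((key _).mpr rfl),
    fun J hJ => (key J).mp (maximalSuffers_iff.mp hJ)⟩

/-- under the original non-overlapping profile, the maximal set of individuals
suffering from a violation of the Equality Code is uniquely defined and equals
`Ĉ((ρ̊₋J̄, ρ̃J̄); I) \ Ĉ(ρ̊; I)` where `J̄ = (𝒥 ∩ I) \ Ĉ(ρ̊; I)`. -/
theorem maximal_suffers_unique (σ : ι → ℝ) (hσ : Function.Injective σ)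
    (q : Option R → ℕ) (ρ : ι → Finset R) (hρ : ∀ i, (ρ i).card ≤ 1) (e : R)
    (JJ : Finset ι) (hJJ : ∀ j ∈ JJ, (ρ j).Nonempty ∧ e ∉ ρ j) :
    ∀ I : Finset ι,
      MaximalSuffers σ q ρ e JJ I
        (aggOA σ q (updProf ρ e ((JJ ∩ I) \ aggOA σ q ρ I)) I \ aggOA σ q ρ I) ∧
      ∀ J : Finset ι, MaximalSuffers σ q ρ e JJ I J →
        J = aggOA σ q (updProf ρ e ((JJ ∩ I) \ aggOA σ q ρ I)) I \ aggOA σ q ρ I :=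
  maximal_suffers_unique_general σ hσ q ρ e JJ
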